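/- arXiv:2201.12906 — 2 statements merged into one kernel-verified Lean document; each statement's English description precedes it below -/
import Mathlib

section
/- Let (C,∂,ι) and (C',∂',ι') be chain complexes over 𝔽₂[U] with 𝔽₂[U]-linear chain maps ι, ι', and suppose (F,h) : (C,ι) → (C',ι') is an enhanced ι-homotopy equivalence; that is, (F,h) is an enhanced ι-homomorphism and there exist an enhanced ι-homomorphism (G,g) : (C',ι') → (C,ι) and pairs (T,t), (T',t') of 𝔽₂[U]-linear maps with (G,g) ∘ (F,h) + (id_C, 0) = ∂_Mor(T,t) and (F,h) ∘ (G,g) + (id_{C'}, 0) = ∂_Mor(T',t'). Then the induced map Φ_{F,h}(x,y) = (F(x), h(x) + F(y)) is an 𝔽₂[U,Q]/(Q²)-equivariant chain homotopy equivalence between the involutive mapping cones (C ⊕ C, D) and (C' ⊕ C', D'): explicitly, Φ_{G,g} ∘ Φ_{F,h} + id = D ∘ Φ_{T,t} + Φ_{T,t} ∘ D and Φ_{F,h} ∘ Φ_{G,g} + id = D' ∘ Φ_{T',t'} + Φ_{T',t'} ∘ D'. -/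
/-!
If `(F,h)` is an enhanced `ι`-homotopy equivalence (with homotopy inverse `(G,g)` and
homotopies `(T,t)`, `(T',t')`), then `Φ_{F,h}` is an `𝔽₂[U,Q]/(Q²)`-equivariant chain
homotopy equivalence between the involutive mapping cones.
-/

noncomputable section

/-- The ring `𝔽₂[U]`. -/
abbrev R2 := Polynomial (ZMod 2)

/-- The differential `∂_Mor(F,h) = (∂' ∘ F + F ∘ ∂, F ∘ ι + ι' ∘ F + ∂' ∘ h + h ∘ ∂)`
on the group of enhanced `ι`-morphisms. -/
def dMor {M N : Type*} [AddCommGroup M] [Module R2 M] [AddCommGroup N] [Module R2 N]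
    (dM ιM : M →ₗ[R2] M) (dN ιN : N →ₗ[R2] N)
    (Fh : (M →ₗ[R2] N) × (M →ₗ[R2] N)) : (M →ₗ[R2] N) × (M →ₗ[R2] N) :=
  (dN ∘ₗ Fh.1 + Fh.1 ∘ₗ dM,
   Fh.1 ∘ₗ ιM + ιN ∘ₗ Fh.1 + dN ∘ₗ Fh.2 + Fh.2 ∘ₗ dM)

/-- Composition of enhanced `ι`-morphisms: `(G,g) ∘ (F,h) = (G ∘ F, G ∘ h + g ∘ F)`. -/
def compMor {M N P : Type*} [AddCommGroup M] [Module R2 M] [AddCommGroup N] [Module R2 N]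
    [AddCommGroup P] [Module R2 P]
    (Gg : (N →ₗ[R2] P) × (N →ₗ[R2] P)) (Fh : (M →ₗ[R2] N) × (M →ₗ[R2] N)) :
    (M →ₗ[R2] P) × (M →ₗ[R2] P) :=
  (Gg.1 ∘ₗ Fh.1, Gg.1 ∘ₗ Fh.2 + Gg.2 ∘ₗ Fh.1)

/-- The involutive mapping cone differential `D(x,y) = (∂ x, x + ι x + ∂ y)` on `C ⊕ C`. -/
def coneD {M : Type*} [AddCommGroup M] [Module R2 M] (d ι : M →ₗ[R2] M) :
    (M × M) →ₗ[R2] (M × M) :=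
  LinearMap.prod (d ∘ₗ LinearMap.fst R2 M M)
    (LinearMap.fst R2 M M + ι ∘ₗ LinearMap.fst R2 M M + d ∘ₗ LinearMap.snd R2 M M)

/-- `Φ_{F,h}(x,y) = (F x, h x + F y)`. -/
def PhiMap {M N : Type*} [AddCommGroup M] [Module R2 M] [AddCommGroup N] [Module R2 N]
    (F h : M →ₗ[R2] N) : (M × M) →ₗ[R2] (N × N) :=
  LinearMap.prod (F ∘ₗ LinearMap.fst R2 M M)
    (h ∘ₗ LinearMap.fst R2 M M + F ∘ₗ LinearMap.snd R2 M M)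

/-!
`Φ` sends a pair `(F,h)` to a map of involutive mapping cones, and it is compatible with
all the structure on pairs: it is additive, sends `(id, 0)` to the identity, turns the
composition of pairs into composition of maps, and turns `∂_Mor(F,h)` into the commutator
`D' ∘ Φ_{F,h} + Φ_{F,h} ∘ D` (the cross terms `F x + F x` cancel in characteristic two).
Hence enhanced `ι`-homomorphisms go to chain maps and the homotopies `(T,t)`, `(T',t')` go
to chain homotopies `Φ_{T,t}`, `Φ_{T',t'}`.
-/

section CharTwoModule

variable {M : Type*} [AddCommGroup M]

theorem CharTwo.add_self_eq_zero_of_module (R : Type*) [Ring R] [CharP R 2] [Module R M]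
    (x : M) : x + x = 0 := by
  rw [← two_smul R x, CharTwo.two_eq_zero, zero_smul]

theorem CharTwo.eq_of_add_eq_zero_of_module (R : Type*) [Ring R] [CharP R 2] [Module R M]
    {x y : M} (hxy : x + y = 0) : x = y := by
  rw [eq_neg_of_add_eq_zero_left hxy, neg_eq_of_add_eq_zero_right
    (CharTwo.add_self_eq_zero_of_module R y)]

end CharTwoModule

section InvolutiveCone

variable {M N P : Type*} [AddCommGroup M] [Module R2 M] [AddCommGroup N] [Module R2 N]
  [AddCommGroup P] [Module R2 P]

@[simp]
theorem PhiMap_apply (F h : M →ₗ[R2] N) (p : M × M) :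
    PhiMap F h p = (F p.1, h p.1 + F p.2) := rfl

@[simp]
theorem coneD_apply (d ι : M →ₗ[R2] M) (p : M × M) :
    coneD d ι p = (d p.1, p.1 + ι p.1 + d p.2) := rfl

theorem PhiMap_add (Fh Fh' : (M →ₗ[R2] N) × (M →ₗ[R2] N)) :
    PhiMap (Fh + Fh').1 (Fh + Fh').2 = PhiMap Fh.1 Fh.2 + PhiMap Fh'.1 Fh'.2 := by
  ext p <;> simp

theorem PhiMap_id_zero : PhiMap (LinearMap.id : M →ₗ[R2] M) 0 = LinearMap.id := by
  ext p <;> simp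

theorem PhiMap_comp_PhiMap (Gg : (N →ₗ[R2] P) × (N →ₗ[R2] P))
    (Fh : (M →ₗ[R2] N) × (M →ₗ[R2] N)) :
    PhiMap Gg.1 Gg.2 ∘ₗ PhiMap Fh.1 Fh.2 = PhiMap (compMor Gg Fh).1 (compMor Gg Fh).2 := by
  ext p <;> simp [compMor, add_comm]

theorem coneD_comp_PhiMap_add_PhiMap_comp_coneD (dM ιM : M →ₗ[R2] M) (dN ιN : N →ₗ[R2] N)
    (F h : M →ₗ[R2] N) :
    coneD dN ιN ∘ₗ PhiMap F h + PhiMap F h ∘ₗ coneD dM ιM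
      = PhiMap (dMor dM ιM dN ιN (F, h)).1 (dMor dM ιM dN ιN (F, h)).2 := by
  refine LinearMap.ext fun p => Prod.ext ?_ ?_
  · simp [dMor]
  · have hF := CharTwo.add_self_eq_zero_of_module R2 (F p.1)
    simp only [dMor, LinearMap.add_apply, LinearMap.comp_apply, PhiMap_apply, coneD_apply,
      Prod.snd_add, map_add]
    rw [← sub_eq_zero, ← hF]
    abel

theorem PhiMap_comp_coneD_of_dMor_eq_zero {dM ιM : M →ₗ[R2] M} {dN ιN : N →ₗ[R2] N}
    {F h : M →ₗ[R2] N} (hFh : dMor dM ιM dN ιN (F, h) = 0) :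
    coneD dN ιN ∘ₗ PhiMap F h = PhiMap F h ∘ₗ coneD dM ιM := by
  apply CharTwo.eq_of_add_eq_zero_of_module R2
  rw [coneD_comp_PhiMap_add_PhiMap_comp_coneD, hFh]
  ext p <;> simp

theorem PhiMap_comp_PhiMap_add_id_of_homotopy {d ι : M →ₗ[R2] M}
    {Gg : (N →ₗ[R2] M) × (N →ₗ[R2] M)} {Fh : (M →ₗ[R2] N) × (M →ₗ[R2] N)}
    {Tt : (M →ₗ[R2] M) × (M →ₗ[R2] M)}
    (hT : compMor Gg Fh + (LinearMap.id, 0) = dMor d ι d ι Tt) :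
    PhiMap Gg.1 Gg.2 ∘ₗ PhiMap Fh.1 Fh.2 + LinearMap.id
      = coneD d ι ∘ₗ PhiMap Tt.1 Tt.2 + PhiMap Tt.1 Tt.2 ∘ₗ coneD d ι := by
  rw [coneD_comp_PhiMap_add_PhiMap_comp_coneD, ← hT, PhiMap_add, PhiMap_comp_PhiMap,
    PhiMap_id_zero]

end InvolutiveCone

theorem Phi_of_enhanced_homotopy_equivalence_general
    {C C' : Type*} [AddCommGroup C] [Module R2 C] [AddCommGroup C'] [Module R2 C']
    (d ι : C →ₗ[R2] C) (d' ι' : C' →ₗ[R2] C')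
    (F h : C →ₗ[R2] C') (G g : C' →ₗ[R2] C) (T t : C →ₗ[R2] C) (T' t' : C' →ₗ[R2] C')
    (hFh : dMor d ι d' ι' (F, h) = 0)
    (hGg : dMor d' ι' d ι (G, g) = 0)
    (hT : compMor (G, g) (F, h) + ((LinearMap.id : C →ₗ[R2] C), (0 : C →ₗ[R2] C))
        = dMor d ι d ι (T, t))
    (hT' : compMor (F, h) (G, g) + ((LinearMap.id : C' →ₗ[R2] C'), (0 : C' →ₗ[R2] C'))
        = dMor d' ι' d' ι' (T', t')) :
    -- `Φ_{F,h}` and `Φ_{G,g}` are chain maps between the involutive mapping cones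
    coneD d' ι' ∘ₗ PhiMap F h = PhiMap F h ∘ₗ coneD d ι ∧
    coneD d ι ∘ₗ PhiMap G g = PhiMap G g ∘ₗ coneD d' ι' ∧
    -- the explicit chain homotopies:
    PhiMap G g ∘ₗ PhiMap F h + LinearMap.id
      = coneD d ι ∘ₗ PhiMap T t + PhiMap T t ∘ₗ coneD d ι ∧
    PhiMap F h ∘ₗ PhiMap G g + LinearMap.id
      = coneD d' ι' ∘ₗ PhiMap T' t' + PhiMap T' t' ∘ₗ coneD d' ι' ∧
    -- `Φ_{F,h}` is `Q`-equivariant, where `Q • (x,y) = (0,x)`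
    (∀ p : C × C, PhiMap F h ((0 : C), p.1) = ((0 : C'), (PhiMap F h p).1)) :=
  ⟨PhiMap_comp_coneD_of_dMor_eq_zero hFh, PhiMap_comp_coneD_of_dMor_eq_zero hGg,
    PhiMap_comp_PhiMap_add_id_of_homotopy hT, PhiMap_comp_PhiMap_add_id_of_homotopy hT',
    fun p => by simp⟩

theorem Phi_of_enhanced_homotopy_equivalence
    {C C' : Type*} [AddCommGroup C] [Module R2 C] [AddCommGroup C'] [Module R2 C']
    (d ι : C →ₗ[R2] C) (d' ι' : C' →ₗ[R2] C')
    (hd : d ∘ₗ d = 0) (hd' : d' ∘ₗ d' = 0)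
    (hι : d ∘ₗ ι = ι ∘ₗ d) (hι' : d' ∘ₗ ι' = ι' ∘ₗ d')
    (F h : C →ₗ[R2] C') (G g : C' →ₗ[R2] C) (T t : C →ₗ[R2] C) (T' t' : C' →ₗ[R2] C')
    (hFh : dMor d ι d' ι' (F, h) = 0)
    (hGg : dMor d' ι' d ι (G, g) = 0)
    (hT : compMor (G, g) (F, h) + ((LinearMap.id : C →ₗ[R2] C), (0 : C →ₗ[R2] C))
        = dMor d ι d ι (T, t))
    (hT' : compMor (F, h) (G, g) + ((LinearMap.id : C' →ₗ[R2] C'), (0 : C' →ₗ[R2] C'))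
        = dMor d' ι' d' ι' (T', t')) :
    -- `Φ_{F,h}` and `Φ_{G,g}` are chain maps between the involutive mapping cones
    coneD d' ι' ∘ₗ PhiMap F h = PhiMap F h ∘ₗ coneD d ι ∧
    coneD d ι ∘ₗ PhiMap G g = PhiMap G g ∘ₗ coneD d' ι' ∧
    -- the explicit chain homotopies:
    PhiMap G g ∘ₗ PhiMap F h + LinearMap.id
      = coneD d ι ∘ₗ PhiMap T t + PhiMap T t ∘ₗ coneD d ι ∧
    PhiMap F h ∘ₗ PhiMap G g + LinearMap.id
      = coneD d' ι' ∘ₗ PhiMap T' t' + PhiMap T' t' ∘ₗ coneD d' ι' ∧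
    -- `Φ_{F,h}` is `Q`-equivariant, where `Q • (x,y) = (0,x)`
    (∀ p : C × C, PhiMap F h ((0 : C), p.1) = ((0 : C'), (PhiMap F h p).1)) :=
  Phi_of_enhanced_homotopy_equivalence_general d ι d' ι' F h G g T t T' t' hFh hGg hT hT'

end
end

section
/- Let n ≥ 1, let A be an n × n matrix with entries in 𝔽₂[U] satisfying A·A = 0, let P be an invertible n × n matrix over 𝔽₂[U], and set B := P⁻¹·A·P. Then there exists an n × n matrix H over 𝔽₂[U] such that P·B'·P⁻¹ + A' = A·H + H·A, where ' denotes the entrywise formal derivative d/dU; indeed H = P'·P⁻¹ has this property. Equivalently, for a finitely generated free chain complex (C,∂) over 𝔽₂[U] and any two bases of C, the endomorphisms Φ obtained by differentiating the matrix of ∂ with respect to U in the two respective bases are 𝔽₂[U]-equivariantly chain homotopic. -/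
/-!
If `δ` is a derivation, the Leibniz rule and `δ(P⁻¹) = -P⁻¹·δP·P⁻¹` give
`P·δ(P⁻¹AP)·P⁻¹ = δA + (AH - HA)` with `H = δP·P⁻¹`. A change of basis with matrix `P`
conjugates the matrix of `∂`, so the two maps `Φ` differ by the commutator `∂H - H∂`,
which in characteristic two is the null-homotopic map `∂H + H∂`.
-/

noncomputable section

namespace CharTwo

variable {M : Type*} [AddCommGroup M]

theorem add_self_eq_zero_of_module_s12 (R : Type*) [Ring R] [CharP R 2] [Module R M] (x : M) :
    x + x = 0 := by
  rw [← two_smul R x, two_eq_zero, zero_smul]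

theorem sub_eq_add_of_module (R : Type*) [Ring R] [CharP R 2] [Module R M] (x y : M) :
    x - y = x + y := by
  rw [sub_eq_add_neg, neg_eq_of_add_eq_zero_left (add_self_eq_zero_of_module_s12 R y)]

end CharTwo

namespace Matrix

variable {l m n S R : Type*} [CommSemiring S] [CommRing R] [Algebra S R]

theorem map_derivation_mul [Fintype m] (δ : Derivation S R R) (M : Matrix l m R)
    (N : Matrix m n R) : (M * N).map δ = M.map δ * N + M * N.map δ := by
  ext i j
  simp only [map_apply, mul_apply, add_apply, map_sum, Derivation.leibniz, smul_eq_mul,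
    Finset.sum_add_distrib, mul_comm, add_comm]

theorem map_derivation_one [DecidableEq n] (δ : Derivation S R R) :
    (1 : Matrix n n R).map δ = 0 := by
  ext i j
  rw [map_apply, one_apply]
  split_ifs <;> simp

variable [Fintype n] [DecidableEq n]

theorem map_derivation_nonsing_inv (δ : Derivation S R R) {P : Matrix n n R} (hP : IsUnit P) :
    P⁻¹.map δ = -(P⁻¹ * P.map δ * P⁻¹) := by
  have hdet := (isUnit_iff_isUnit_det P).mp hP
  have h : P.map δ * P⁻¹ + P * P⁻¹.map δ = 0 := by
    rw [← map_derivation_mul, mul_nonsing_inv P hdet, map_derivation_one]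
  rw [← nonsing_inv_mul_cancel_left (A := P) (P⁻¹.map δ) hdet, eq_neg_of_add_eq_zero_right h,
    Matrix.mul_neg, Matrix.mul_assoc]

theorem map_derivation_conj (δ : Derivation S R R) {P : Matrix n n R} (hP : IsUnit P)
    (A : Matrix n n R) :
    P * (P⁻¹ * A * P).map δ * P⁻¹ = A.map δ + (A * (P.map δ * P⁻¹) - P.map δ * P⁻¹ * A) := by
  have hdet := (isUnit_iff_isUnit_det P).mp hP
  rw [map_derivation_mul, map_derivation_mul, map_derivation_nonsing_inv δ hP]
  simp only [Matrix.mul_add, Matrix.add_mul, Matrix.mul_neg, Matrix.neg_mul, ← Matrix.mul_assoc,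
    mul_nonsing_inv_cancel_right _ _ hdet, mul_nonsing_inv P hdet, Matrix.one_mul]
  abel

theorem map_derivation_conj_add_of_charTwo [CharP R 2] (δ : Derivation S R R) {P : Matrix n n R}
    (hP : IsUnit P) (A : Matrix n n R) :
    P * (P⁻¹ * A * P).map δ * P⁻¹ + A.map δ = A * (P.map δ * P⁻¹) + P.map δ * P⁻¹ * A := by
  rw [map_derivation_conj δ hP, add_right_comm, CharTwo.add_self_eq_zero_of_module_s12 R, zero_add,
    CharTwo.sub_eq_add_of_module R]

end Matrix

namespace Module.Basis

variable {ι S R C : Type*} [Fintype ι] [DecidableEq ι] [CommSemiring S] [CommRing R]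
  [Algebra S R] [AddCommGroup C] [Module R C]

theorem inv_toMatrix (b₁ b₂ : Basis ι R C) : (b₁.toMatrix b₂)⁻¹ = b₂.toMatrix b₁ :=
  Matrix.inv_eq_left_inv (b₂.toMatrix_mul_toMatrix_flip b₁)

theorem isUnit_toMatrix (b₁ b₂ : Basis ι R C) : IsUnit (b₁.toMatrix b₂) :=
  (Matrix.isUnit_iff_isUnit_det _).mpr
    (Matrix.isUnit_det_of_left_inverse (b₂.toMatrix_mul_toMatrix_flip b₁))

theorem linearMap_toMatrix_eq_conj (b₁ b₂ : Basis ι R C) (f : C →ₗ[R] C) :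
    LinearMap.toMatrix b₂ b₂ f
      = (b₁.toMatrix b₂)⁻¹ * LinearMap.toMatrix b₁ b₁ f * b₁.toMatrix b₂ := by
  rw [inv_toMatrix, basis_toMatrix_mul_linearMap_toMatrix_mul_basis_toMatrix]

theorem toLin_eq_toLin_conj (b₁ b₂ : Basis ι R C) (M : Matrix ι ι R) :
    Matrix.toLin b₂ b₂ M = Matrix.toLin b₁ b₁ (b₁.toMatrix b₂ * M * (b₁.toMatrix b₂)⁻¹) := by
  apply (LinearMap.toMatrix b₁ b₁).injective
  rw [LinearMap.toMatrix_toLin, inv_toMatrix,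
    ← basis_toMatrix_mul_linearMap_toMatrix_mul_basis_toMatrix b₁ b₂ b₁ b₂,
    LinearMap.toMatrix_toLin]

/-- The paper's `Φ` for `f = ∂`, computed in the basis `b`, with `δ = d/dU`. -/
def derivEnd (b : Basis ι R C) (δ : Derivation S R R) (f : C →ₗ[R] C) : C →ₗ[R] C :=
  Matrix.toLin b b ((LinearMap.toMatrix b b f).map δ)

theorem derivEnd_eq_add_commutator (b₁ b₂ : Basis ι R C) (δ : Derivation S R R)
    (f : C →ₗ[R] C) :
    b₂.derivEnd δ f = b₁.derivEnd δ f
      + (f ∘ₗ Matrix.toLin b₁ b₁ ((b₁.toMatrix b₂).map δ * (b₁.toMatrix b₂)⁻¹)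
        - Matrix.toLin b₁ b₁ ((b₁.toMatrix b₂).map δ * (b₁.toMatrix b₂)⁻¹) ∘ₗ f) := by
  rw [derivEnd, derivEnd, linearMap_toMatrix_eq_conj b₁ b₂, toLin_eq_toLin_conj b₁ b₂,
    Matrix.map_derivation_conj δ (isUnit_toMatrix b₁ b₂), map_add, map_sub,
    Matrix.toLin_mul b₁ b₁ b₁ (LinearMap.toMatrix b₁ b₁ f),
    Matrix.toLin_mul b₁ b₁ b₁ _ (LinearMap.toMatrix b₁ b₁ f), Matrix.toLin_toMatrix]

theorem exists_derivEnd_add_derivEnd_eq_of_charTwo [CharP R 2] (b₁ b₂ : Basis ι R C)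
    (δ : Derivation S R R) (f : C →ₗ[R] C) :
    ∃ H : C →ₗ[R] C, b₁.derivEnd δ f + b₂.derivEnd δ f = f ∘ₗ H + H ∘ₗ f :=
  ⟨_, by rw [b₁.derivEnd_eq_add_commutator b₂, ← add_assoc, CharTwo.add_self_eq_zero_of_module_s12 R,
    zero_add, CharTwo.sub_eq_add_of_module R]⟩

end Module.Basis

theorem Phi_independent_of_basis_up_to_chain_homotopy_general
    (n : ℕ)
    (A P : Matrix (Fin n) (Fin n) R2) (hP : IsUnit P)
    (C : Type*) [AddCommGroup C] [Module R2 C] (b₁ b₂ : Module.Basis (Fin n) R2 C)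
    (d : C →ₗ[R2] C) :
    -- there is a matrix `H` with `P·B'·P⁻¹ + A' = A·H + H·A`, where `B = P⁻¹·A·P`
    (∃ H : Matrix (Fin n) (Fin n) R2,
        P * (P⁻¹ * A * P).map (fun p => Polynomial.derivative p) * P⁻¹
            + A.map (fun p => Polynomial.derivative p)
          = A * H + H * A) ∧
    -- indeed `H = P'·P⁻¹` has this property
    (P * (P⁻¹ * A * P).map (fun p => Polynomial.derivative p) * P⁻¹
        + A.map (fun p => Polynomial.derivative p)
      = A * (P.map (fun p => Polynomial.derivative p) * P⁻¹)
          + (P.map (fun p => Polynomial.derivative p) * P⁻¹) * A) ∧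
    -- equivalently: the maps `Φ` computed in two bases are chain homotopic
    (∃ Hl : C →ₗ[R2] C,
        Matrix.toLin b₁ b₁ ((LinearMap.toMatrix b₁ b₁ d).map fun p => Polynomial.derivative p)
            + Matrix.toLin b₂ b₂ ((LinearMap.toMatrix b₂ b₂ d).map fun p => Polynomial.derivative p)
          = d ∘ₗ Hl + Hl ∘ₗ d) := by
  have hmatrix := Matrix.map_derivation_conj_add_of_charTwo Polynomial.derivative' hP A
  exact ⟨⟨_, hmatrix⟩, hmatrix,
    b₁.exists_derivEnd_add_derivEnd_eq_of_charTwo b₂ Polynomial.derivative' d⟩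

theorem Phi_independent_of_basis_up_to_chain_homotopy
    (n : ℕ) (hn : 1 ≤ n)
    (A P : Matrix (Fin n) (Fin n) R2) (hA : A * A = 0) (hP : IsUnit P)
    (C : Type*) [AddCommGroup C] [Module R2 C] (b₁ b₂ : Module.Basis (Fin n) R2 C)
    (d : C →ₗ[R2] C) (hd : d ∘ₗ d = 0) :
    -- there is a matrix `H` with `P·B'·P⁻¹ + A' = A·H + H·A`, where `B = P⁻¹·A·P`
    (∃ H : Matrix (Fin n) (Fin n) R2,
        P * (P⁻¹ * A * P).map (fun p => Polynomial.derivative p) * P⁻¹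
            + A.map (fun p => Polynomial.derivative p)
          = A * H + H * A) ∧
    -- indeed `H = P'·P⁻¹` has this property
    (P * (P⁻¹ * A * P).map (fun p => Polynomial.derivative p) * P⁻¹
        + A.map (fun p => Polynomial.derivative p)
      = A * (P.map (fun p => Polynomial.derivative p) * P⁻¹)
          + (P.map (fun p => Polynomial.derivative p) * P⁻¹) * A) ∧
    -- equivalently: the maps `Φ` computed in two bases are chain homotopic
    (∃ Hl : C →ₗ[R2] C,
        Matrix.toLin b₁ b₁ ((LinearMap.toMatrix b₁ b₁ d).map fun p => Polynomial.derivative p)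
            + Matrix.toLin b₂ b₂ ((LinearMap.toMatrix b₂ b₂ d).map fun p => Polynomial.derivative p)
          = d ∘ₗ Hl + Hl ∘ₗ d) :=
  Phi_independent_of_basis_up_to_chain_homotopy_general n A P hP C b₁ b₂ d

end
end
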